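/- If a graph G contains a vertex v such that for every vertex w of G there is an induced subgraph of G isomorphic to P₄, C₄, or 2K₂ containing both v and w, then G is indecomposable with respect to Tyshkevich composition. -/

import Mathlib

/-!
In `G₁ ∘ G₀` a vertex of `K` is adjacent to every other vertex of `K` and of `G₀`, and a vertex
of `S` to no other vertex of `S` or of `G₀`. Let `F` be an induced subgraph meeting both sides
in which no vertex is isolated or dominating. Some vertex `s` of `F` lies in `S` (a vertex of
`K` misses someone, necessarily in `S`); `s` has a neighbour `k ∈ K`, `k` misses some
`s' ∈ S`, and `s'` has a neighbour `k' ∈ K`. Together with a vertex of `G₀` these are five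
distinct vertices. Since `P₄`, `C₄` and `2K₂` have four vertices, none isolated or dominating,
each of their induced copies lies on one side, so it cannot contain both `v` and a vertex on
the other side from `v`.
-/

def IsIndep {V : Type} (G : SimpleGraph V) (S : Set V) : Prop :=
  S.Pairwise fun a b => ¬ G.Adj a b

def IsKSPart {V : Type} (G : SimpleGraph V) (K S : Set V) : Prop :=
  (∀ v, v ∈ K ∨ v ∈ S) ∧ (∀ v, ¬(v ∈ K ∧ v ∈ S)) ∧ G.IsClique K ∧ IsIndep G S

def IsSplit {V : Type} (G : SimpleGraph V) : Prop :=
  ∃ K S : Set V, IsKSPart G K S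

def tcomp {V1 V0 : Type} (G1 : SimpleGraph V1) (K : Set V1) (G0 : SimpleGraph V0) :
    SimpleGraph (V1 ⊕ V0) where
  Adj x y :=
    match x, y with
    | Sum.inl a, Sum.inl b => G1.Adj a b
    | Sum.inl a, Sum.inr _ => a ∈ K
    | Sum.inr _, Sum.inl b => b ∈ K
    | Sum.inr a, Sum.inr b => G0.Adj a b
  symm := by
    constructor
    rintro (a | a) (b | b) h
    · exact G1.adj_symm h
    · exact h
    · exact h
    · exact G0.adj_symm h
  loopless := by
    constructor
    rintro (a | a) h
    · exact G1.irrefl h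
    · exact G0.irrefl h

def Decomposable {V : Type} (G : SimpleGraph V) : Prop :=
  ∃ (V1 V0 : Type) (_ : Nonempty V1) (_ : Nonempty V0)
    (G1 : SimpleGraph V1) (K S : Set V1) (G0 : SimpleGraph V0),
    IsKSPart G1 K S ∧ Nonempty (G ≃g tcomp G1 K G0)

def twoK2 : SimpleGraph (Fin 4) :=
  SimpleGraph.fromRel (fun a b => (a.val < 2 ∧ b.val < 2) ∨ (2 ≤ a.val ∧ 2 ≤ b.val))

def HasInducedCopyThrough {α V : Type} (F : SimpleGraph α) (G : SimpleGraph V)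
    (v w : V) : Prop :=
  ∃ f : F ↪g G, v ∈ Set.range ⇑f ∧ w ∈ Set.range ⇑f

section Composition

variable {V1 V0 : Type} {G1 : SimpleGraph V1} {K S : Set V1} {G0 : SimpleGraph V0}

theorem IsKSPart.exists_mem_S_of_not_adj (hKS : IsKSPart G1 K S) {a : V1} (ha : a ∈ K)
    {y : V1 ⊕ V0} (hne : Sum.inl a ≠ y) (hy : ¬ (tcomp G1 K G0).Adj (Sum.inl a) y) :
    ∃ b ∈ S, y = Sum.inl b := by
  obtain ⟨hcover, -, hclique, -⟩ := hKS
  rcases y with b | x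
  · have hb : b ∉ K := fun hb => hy (hclique ha hb fun hab => hne (congrArg _ hab))
    exact ⟨b, (hcover b).resolve_left hb, rfl⟩
  · exact absurd ha hy

theorem IsKSPart.exists_mem_K_of_adj (hKS : IsKSPart G1 K S) {a : V1} (ha : a ∈ S)
    {y : V1 ⊕ V0} (hy : (tcomp G1 K G0).Adj (Sum.inl a) y) :
    ∃ b ∈ K, y = Sum.inl b := by
  obtain ⟨hcover, hdisj, -, hindep⟩ := hKS
  rcases y with b | x
  · refine ⟨b, (hcover b).resolve_right fun hb => ?_, rfl⟩
    exact hindep ha hb (G1.ne_of_adj hy) hy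
  · exact absurd ⟨hy, ha⟩ (hdisj a)

def NoIsolatedOrDominating {α : Type} (F : SimpleGraph α) : Prop :=
  (∀ i, ∃ j, F.Adj i j) ∧ ∀ i, ∃ j, Fᶜ.Adj i j

theorem IsKSPart.five_le_card_of_embedding {α : Type} [Fintype α] {F : SimpleGraph α}
    (hKS : IsKSPart G1 K S) (hF : NoIsolatedOrDominating F) (f : F ↪g tcomp G1 K G0)
    {i b : α} {a : V1} {x : V0} (hi : f i = Sum.inl a) (hb : f b = Sum.inr x) :
    5 ≤ Fintype.card α := by
  have hK_of_adj : ∀ {s t : α} {σ : V1}, σ ∈ S → f s = Sum.inl σ → F.Adj s t →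
      ∃ κ ∈ K, f t = Sum.inl κ := fun hσ hs hst =>
    hKS.exists_mem_K_of_adj hσ (hs ▸ f.map_adj_iff.mpr hst)
  have hS_of_nonadj : ∀ {k t : α} {κ : V1}, κ ∈ K → f k = Sum.inl κ → Fᶜ.Adj k t →
      ∃ σ ∈ S, f t = Sum.inl σ := fun hκ hk hkt =>
    hKS.exists_mem_S_of_not_adj hκ (hk ▸ f.injective.ne hkt.1)
      (hk ▸ fun h => hkt.2 (f.map_adj_iff.mp h))
  obtain ⟨s, σ, hσ, hs⟩ : ∃ s σ, σ ∈ S ∧ f s = Sum.inl σ := by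
    rcases hKS.1 a with ha | ha
    · obtain ⟨t, ht⟩ := hF.2 i
      obtain ⟨σ, hσ, hσt⟩ := hS_of_nonadj ha hi ht
      exact ⟨t, σ, hσ, hσt⟩
    · exact ⟨i, a, ha, hi⟩
  obtain ⟨k, hsk⟩ := hF.1 s
  obtain ⟨κ, hκ, hk⟩ := hK_of_adj hσ hs hsk
  obtain ⟨s', hks'⟩ := hF.2 k
  obtain ⟨σ', hσ', hs'⟩ := hS_of_nonadj hκ hk hks'
  obtain ⟨k', hs'k'⟩ := hF.1 s'
  obtain ⟨κ', hκ', hk'⟩ := hK_of_adj hσ' hs' hs'k'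
  -- `s ≠ s'` and `k ≠ k'` since `k` is adjacent to `s` but not to `s'`; the other pairs lie
  -- in different parts.
  have hnodup : [b, s, k, s', k'].Nodup := by
    have hdisj := hKS.2.1
    have hks := hsk.symm
    have hk's' := hs'k'.symm
    rw [SimpleGraph.compl_adj] at hks'
    simp only [List.nodup_cons, List.mem_cons, List.not_mem_nil, List.nodup_nil]
    grind
  simpa using hnodup.length_le_card

theorem IsKSPart.not_hasInducedCopyThrough {V α : Type} [Fintype α] {G : SimpleGraph V}
    {F : SimpleGraph α} (hKS : IsKSPart G1 K S) (hF : NoIsolatedOrDominating F)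
    (hcard : Fintype.card α < 5) (e : G ≃g tcomp G1 K G0) {v w : V}
    (hvw : (e v).isLeft ≠ (e w).isLeft) : ¬ HasInducedCopyThrough F G v w := by
  rintro ⟨f, ⟨i, rfl⟩, ⟨j, rfl⟩⟩
  refine hcard.not_ge ?_
  let g : F ↪g tcomp G1 K G0 := e.toEmbedding.comp f
  change (g i).isLeft ≠ (g j).isLeft at hvw
  rcases hgi : g i with a | x <;> rcases hgj : g j with a' | x' <;>
    simp only [hgi, hgj, Sum.isLeft_inl, Sum.isLeft_inr, ne_eq, not_true_eq_false] at hvw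
  · exact hKS.five_le_card_of_embedding hF g hgi hgj
  · exact hKS.five_le_card_of_embedding hF g hgj hgi

end Composition

instance : DecidableRel (SimpleGraph.pathGraph 4).Adj := fun _ _ =>
  decidable_of_iff _ SimpleGraph.pathGraph_adj.symm

instance : DecidableRel twoK2.Adj := fun a b =>
  decidable_of_iff _ (SimpleGraph.fromRel_adj _ a b).symm

theorem noIsolatedOrDominating_pathGraph_four :
    NoIsolatedOrDominating (SimpleGraph.pathGraph 4) := by
  unfold NoIsolatedOrDominating; decide

theorem noIsolatedOrDominating_cycleGraph_four :
    NoIsolatedOrDominating (SimpleGraph.cycleGraph 4) := by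
  unfold NoIsolatedOrDominating; decide

theorem noIsolatedOrDominating_twoK2 : NoIsolatedOrDominating twoK2 := by
  unfold NoIsolatedOrDominating; decide

/-- If some vertex `v` of `G` is such that every vertex `w` lies together with `v` in an
induced `P₄`, `C₄`, or `2K₂`, then `G` is indecomposable. -/
theorem stmt10 {V : Type} (G : SimpleGraph V)
    (h : ∃ v, ∀ w,
      HasInducedCopyThrough (SimpleGraph.pathGraph 4) G v w ∨
      HasInducedCopyThrough (SimpleGraph.cycleGraph 4) G v w ∨
      HasInducedCopyThrough twoK2 G v w) :
    ¬ Decomposable G := by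
  rintro ⟨V1, V0, ⟨a⟩, ⟨x⟩, G1, K, S, G0, hKS, ⟨e⟩⟩
  obtain ⟨v, hv⟩ := h
  obtain ⟨w, hvw⟩ : ∃ w, (e v).isLeft ≠ (e w).isLeft := by
    cases e v
    · exact ⟨e.symm (.inr x), by simp⟩
    · exact ⟨e.symm (.inl a), by simp⟩
  have hcard : Fintype.card (Fin 4) < 5 := by simp
  rcases hv w with hc | hc | hc
  · exact hKS.not_hasInducedCopyThrough noIsolatedOrDominating_pathGraph_four hcard e hvw hc
  · exact hKS.not_hasInducedCopyThrough noIsolatedOrDominating_cycleGraph_four hcard e hvw hc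
  · exact hKS.not_hasInducedCopyThrough noIsolatedOrDominating_twoK2 hcard e hvw hc
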